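/- arXiv:2506.20778 — 3 statements merged into one kernel-verified Lean document; each statement's English description precedes it below -/
import Mathlib

section
/- Let X = [d]×[d], let H and H' be modular Hadamard matrices in K^{d×d}, let {x_{ij}} and {x'_{ij}} be the corresponding SICs in L^d given by the construction, let G, G' ∈ K^{X×X} be the entrywise squares of their Gram matrices (G_{(i,j),(k,l)} = (x_{ij}, x_{kl})² and similarly for G'), and let H̃, H̃' be defined by H̃_{(i,j),(k,l)} = H_{kj}·H_{il} and H̃'_{(i,j),(k,l)} = H'_{kj}·H'_{il}. If a permutation π ∈ S_X induces a strong equivalence from G to G', then π induces a strong equivalence from H̃ to H̃'. -/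
open scoped BigOperators

noncomputable section

/-- The sesquilinear form `(x, y) = ∑ₖ conj (x k) * y k` on `Fin d → L`. -/
def sesq {L : Type*} [Field L] (conj : L →+* L) {d : ℕ} (x y : Fin d → L) : L :=
  ∑ k, conj (x k) * y k

/-- The SIC vectors of the construction: `x i j = h j ∘ (𝟙 + z • e i)` with
`z = -2(1 + i0)`, i.e. the `k`-th entry is `H k j * (1 + z * δ_{k i})`. -/
def sicVec {K L : Type*} [Field K] [Field L] (φ : K →+* L) (i0 : L) {d : ℕ}
    (H : Matrix (Fin d) (Fin d) K) (i j : Fin d) : Fin d → L :=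
  fun k => φ (H k j) * (1 + (-2 * (1 + i0)) * (if k = i then 1 else 0))

/-- The SIC vectors indexed by `[d] × [d]`. -/
def sicFam {K L : Type*} [Field K] [Field L] (φ : K →+* L) (i0 : L) {d : ℕ}
    (H : Matrix (Fin d) (Fin d) K) : Fin d × Fin d → Fin d → L :=
  fun m => sicVec φ i0 H m.1 m.2

/-- `(π, σ)` induces a weak equivalence from the matrix `A` to `A'`. -/
def MatWeakEquiv {R : Type*} [CommRing R] {X : Type*} (π σ : Equiv.Perm X)
    (A A' : Matrix X X R) : Prop :=
  ∃ ε ε' : X → R, (∀ i, ε i = 1 ∨ ε i = -1) ∧ (∀ i, ε' i = 1 ∨ ε' i = -1) ∧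
    ∀ i j, A' (π i) (σ j) = ε i * ε' j * A i j

/-- `π` induces a strong equivalence from the matrix `A` to `A'`. -/
def MatStrongEquiv {R : Type*} [CommRing R] {X : Type*} (π : Equiv.Perm X)
    (A A' : Matrix X X R) : Prop :=
  ∃ ε : X → R, (∀ i, ε i = 1 ∨ ε i = -1) ∧
    ∀ i j, A' (π i) (π j) = ε i * ε j * A i j

/-- `π` induces a weak equivalence from the tuple `y` to the tuple `y'`:
there are an invertible linear map `U` preserving the sesquilinear form, scalars `c m`
with `conj (c m) * c m` constant, and a field automorphism `γ` of `L` commuting with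
conjugation, such that `y' (π m) = c m • γ (U (y m))` (with `γ` acting entrywise). -/
def SICWeakEquiv {L : Type*} [Field L] (conj : L →+* L) {d : ℕ} {X : Type*}
    (π : Equiv.Perm X) (y y' : X → Fin d → L) : Prop :=
  ∃ (U : (Fin d → L) ≃ₗ[L] (Fin d → L)) (c : X → L) (cc : L) (γ : L ≃+* L),
    (∀ v w : Fin d → L, sesq conj (U v) (U w) = sesq conj v w) ∧
    (∀ m, conj (c m) * c m = cc) ∧
    (∀ a : L, γ (conj a) = conj (γ a)) ∧
    (∀ m, y' (π m) = fun k => c m * γ (U (y m) k))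

/-- `π` induces a strong equivalence from the tuple `y` to the tuple `y'`
(as in `SICWeakEquiv`, but with `γ` the identity). -/
def SICStrongEquiv {L : Type*} [Field L] (conj : L →+* L) {d : ℕ} {X : Type*}
    (π : Equiv.Perm X) (y y' : X → Fin d → L) : Prop :=
  ∃ (U : (Fin d → L) ≃ₗ[L] (Fin d → L)) (c : X → L) (cc : L),
    (∀ v w : Fin d → L, sesq conj (U v) (U w) = sesq conj v w) ∧
    (∀ m, conj (c m) * c m = cc) ∧
    (∀ m, y' (π m) = fun k => c m * U (y m) k)

/-- The matrix `H̃` indexed by `[d] × [d]` with `H̃ (i,j) (k,l) = H k j * H i l`. -/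
def htilde {K : Type*} [Field K] {d : ℕ} (H : Matrix (Fin d) (Fin d) K) :
    Matrix (Fin d × Fin d) (Fin d × Fin d) K :=
  Matrix.of fun m n : Fin d × Fin d => H n.1 m.2 * H m.1 n.2

section Aux

variable {K L : Type*} [Field K] [Field L]

lemma sesq_sic (φ : K →+* L) (i0 : L) (hi0 : i0 ^ 2 = -1)
    (conj : L →+* L) (hconjφ : ∀ a : K, conj (φ a) = φ a) (hconji : conj i0 = -i0)
    {d : ℕ} (H : Matrix (Fin d) (Fin d) K) (i j p q : Fin d) :
    sesq conj (sicVec φ i0 H i j) (sicVec φ i0 H p q)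
      = φ ((H.transpose * H) j q)
        + (-2 * (1 - i0)) * (φ (H i j) * φ (H i q))
        + (-2 * (1 + i0)) * (φ (H p j) * φ (H p q))
        + (if i = p then (8 : L) * (φ (H i j) * φ (H i q)) else 0) := by
  have hterm : ∀ k, conj (sicVec φ i0 H i j k) * sicVec φ i0 H p q k
      = φ (H k j) * φ (H k q)
        + (if k = i then (-2 * (1 - i0)) * (φ (H i j) * φ (H i q)) else 0)
        + ((if k = p then (-2 * (1 + i0)) * (φ (H p j) * φ (H p q)) else 0)
        + (if k = i then (if k = p then (8 : L) * (φ (H i j) * φ (H i q)) else 0) else 0)) := by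
    intro k
    simp only [sicVec, map_mul, map_add, map_one, map_neg, map_ofNat, hconjφ, hconji,
      apply_ite conj, map_zero]
    by_cases h1 : k = i
    · subst h1
      by_cases h2 : k = p
      · subst h2
        simp only [eq_self_iff_true, if_true, ite_true]
        linear_combination (-4 * (φ (H k j) * φ (H k q))) * hi0
      · simp only [eq_self_iff_true, if_true, ite_true, if_neg h2]
        ring
    · by_cases h2 : k = p
      · subst h2
        simp only [eq_self_iff_true, if_true, ite_true, if_neg h1]
        ring
      · simp only [if_neg h1, if_neg h2]
        ring
  have S1 : ∑ k, φ (H k j) * φ (H k q) = φ ((H.transpose * H) j q) := by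
    rw [Matrix.mul_apply, map_sum]
    simp [Matrix.transpose_apply, map_mul]
  have S2 : (∑ k, if k = i then (-2 * (1 - i0)) * (φ (H i j) * φ (H i q)) else 0)
      = (-2 * (1 - i0)) * (φ (H i j) * φ (H i q)) := by
    simp
  have S3 : (∑ k, if k = p then (-2 * (1 + i0)) * (φ (H p j) * φ (H p q)) else 0)
      = (-2 * (1 + i0)) * (φ (H p j) * φ (H p q)) := by
    simp
  have S4 : (∑ k, if k = i then (if k = p then (8 : L) * (φ (H i j) * φ (H i q)) else 0) else 0)
      = (if i = p then (8 : L) * (φ (H i j) * φ (H i q)) else 0) := by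
    simp
  unfold sesq
  rw [Finset.sum_congr rfl fun k _ => hterm k, Finset.sum_add_distrib,
    Finset.sum_add_distrib, Finset.sum_add_distrib, S1, S2, S3, S4]
  ring

lemma sesq_sq (φ : K →+* L) (i0 : L) (hi0 : i0 ^ 2 = -1)
    (conj : L →+* L) (hconjφ : ∀ a : K, conj (φ a) = φ a) (hconji : conj i0 = -i0)
    {d : ℕ} (H : Matrix (Fin d) (Fin d) K)
    (hH1 : ∀ i j, H i j ^ 2 = 1)
    (hH2 : H.transpose * H = (d : K) • (1 : Matrix (Fin d) (Fin d) K))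
    (hd8 : (d : K) = 8) (m n : Fin d × Fin d) :
    sesq conj (sicFam φ i0 H m) (sicFam φ i0 H n) ^ 2
      = φ (16 * (H m.1 m.2 * H n.1 n.2 * htilde H m n))
        + (if m = n then (128 : L) else 0) := by
  obtain ⟨i, j⟩ := m
  obtain ⟨p, q⟩ := n
  have sH : ∀ a b, H a b = 1 ∨ H a b = -1 := fun a b =>
    mul_self_eq_one_iff.mp (by rw [← pow_two]; exact hH1 a b)
  have hTT : (H.transpose * H) j q = if j = q then (8 : K) else 0 := by
    rw [hH2, Matrix.smul_apply, Matrix.one_apply, smul_eq_mul, hd8]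
    split_ifs <;> ring
  show sesq conj (sicVec φ i0 H i j) (sicVec φ i0 H p q) ^ 2 = _
  rw [sesq_sic φ i0 hi0 conj hconjφ hconji H i j p q, hTT]
  simp only [htilde, Matrix.of_apply, Prod.mk.injEq, apply_ite φ, map_ofNat, map_zero]
  by_cases hip : i = p <;> by_cases hjq : j = q
  · subst hip; subst hjq
    rcases sH i j with h | h <;>
      simp [h, map_mul, map_one, map_neg, map_ofNat] <;>
      first | ring1 | linear_combination (16 : L) * hi0
  · subst hip
    rcases sH i j with h1 | h1 <;> rcases sH i q with h2 | h2 <;>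
      simp [h1, h2, hjq, map_mul, map_one, map_neg, map_ofNat] <;>
      first | ring1 | linear_combination (16 : L) * hi0
  · subst hjq
    rcases sH i j with h1 | h1 <;> rcases sH p j with h2 | h2 <;>
      simp [h1, h2, hip, map_mul, map_one, map_neg, map_ofNat] <;>
      first | ring1 | linear_combination (16 : L) * hi0
  · rcases sH i j with h1 | h1 <;> rcases sH i q with h2 | h2 <;>
      rcases sH p j with h3 | h3 <;> rcases sH p q with h4 | h4 <;>
      simp [h1, h2, h3, h4, hip, hjq, map_mul, map_one, map_neg, map_ofNat] <;>
      first | ring1 | linear_combination (16 : L) * hi0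

end Aux

theorem stmt_15 {K L : Type*} [Field K] [Field L]
    (hK2 : (2 : K) ≠ 0) (hKroot : ∀ a : K, a ^ 2 ≠ -1)
    (φ : K →+* L) (i0 : L) (hi0 : i0 ^ 2 = -1)
    (conj : L →+* L) (hconj2 : ∀ x : L, conj (conj x) = x)
    (hconjφ : ∀ a : K, conj (φ a) = φ a) (hconji : conj i0 = -i0)
    (hLgen : ∀ x : L, ∃ a b : K, x = φ a + φ b * i0)
    {d : ℕ} (H : Matrix (Fin d) (Fin d) K)
    (hH1 : ∀ i j, H i j ^ 2 = 1)
    (hH2 : H.transpose * H = (d : K) • (1 : Matrix (Fin d) (Fin d) K))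
    (hd8 : (d : K) = 8)
    (H' : Matrix (Fin d) (Fin d) K)
    (hH1' : ∀ i j, H' i j ^ 2 = 1)
    (hH2' : H'.transpose * H' = (d : K) • (1 : Matrix (Fin d) (Fin d) K))
    (π : Equiv.Perm (Fin d × Fin d))
    (hstrong : MatStrongEquiv π
      (Matrix.of fun m n : Fin d × Fin d =>
        (sesq conj (sicFam φ i0 H m) (sicFam φ i0 H n)) ^ 2)
      (Matrix.of fun m n : Fin d × Fin d =>
        (sesq conj (sicFam φ i0 H' m) (sicFam φ i0 H' n)) ^ 2)) :
    MatStrongEquiv π (htilde H) (htilde H') := by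
  classical
  obtain ⟨ε, hεs, hεeq⟩ := hstrong
  have h16 : (16 : K) ≠ 0 := by
    have h : (2 : K) ^ 4 ≠ 0 := pow_ne_zero 4 hK2
    norm_num at h
    exact h
  have keyH := fun m n => sesq_sq φ i0 hi0 conj hconjφ hconji H hH1 hH2 hd8 m n
  have keyH' := fun m n => sesq_sq φ i0 hi0 conj hconjφ hconji H' hH1' hH2' hd8 m n
  set εK : Fin d × Fin d → K := fun m => if ε m = 1 then 1 else -1 with hεKdef
  have hφεK : ∀ m, φ (εK m) = ε m := by
    intro m
    simp only [hεKdef]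
    split_ifs with h
    · simp [h]
    · rcases hεs m with h1 | h1
      · exact absurd h1 h
      · simp [h1]
  have hεKs : ∀ m, εK m = 1 ∨ εK m = -1 := by
    intro m; simp only [hεKdef]; split_ifs <;> simp
  have eH : ∀ a b, H a b * H a b = 1 := fun a b => by rw [← pow_two]; exact hH1 a b
  have eH' : ∀ a b, H' a b * H' a b = 1 := fun a b => by rw [← pow_two]; exact hH1' a b
  have sH : ∀ a b, H a b = 1 ∨ H a b = -1 := fun a b => mul_self_eq_one_iff.mp (eH a b)
  have sH' : ∀ a b, H' a b = 1 ∨ H' a b = -1 := fun a b => mul_self_eq_one_iff.mp (eH' a b)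
  refine ⟨fun m => εK m * H m.1 m.2 * H' (π m).1 (π m).2, ?_, ?_⟩
  · intro m
    show εK m * H m.1 m.2 * H' (π m).1 (π m).2 = 1 ∨
      εK m * H m.1 m.2 * H' (π m).1 (π m).2 = -1
    rcases hεKs m with h1 | h1 <;> rcases sH m.1 m.2 with h2 | h2 <;>
      rcases sH' (π m).1 (π m).2 with h3 | h3 <;> rw [h1, h2, h3] <;> norm_num
  · intro m n
    show htilde H' (π m) (π n) = εK m * H m.1 m.2 * H' (π m).1 (π m).2 *
      (εK n * H n.1 n.2 * H' (π n).1 (π n).2) * htilde H m n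
    by_cases hmn : m = n
    · subst hmn
      have d1 : htilde H' (π m) (π m) = 1 := by
        simp only [htilde, Matrix.of_apply]; exact eH' _ _
      have d2 : htilde H m m = 1 := by
        simp only [htilde, Matrix.of_apply]; exact eH _ _
      rw [d1, d2]
      rcases hεKs m with h1 | h1 <;> rcases sH m.1 m.2 with h2 | h2 <;>
        rcases sH' (π m).1 (π m).2 with h3 | h3 <;> rw [h1, h2, h3] <;> norm_num
    · have hπ : π m ≠ π n := fun h => hmn (π.injective h)
      have heq := hεeq m n
      simp only [Matrix.of_apply] at heq
      rw [keyH' (π m) (π n), keyH m n, if_neg hπ, if_neg hmn, add_zero, add_zero,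
        ← hφεK m, ← hφεK n] at heq
      have heqK : (16 : K) * (H' (π m).1 (π m).2 * H' (π n).1 (π n).2 * htilde H' (π m) (π n))
          = εK m * εK n * (16 * (H m.1 m.2 * H n.1 n.2 * htilde H m n)) :=
        φ.injective (by simp only [map_mul] at heq ⊢; linear_combination heq)
      have heq2 : H' (π m).1 (π m).2 * H' (π n).1 (π n).2 * htilde H' (π m) (π n)
          = εK m * εK n * (H m.1 m.2 * H n.1 n.2 * htilde H m n) :=
        mul_left_cancel₀ h16 (by linear_combination heqK)
      linear_combination H' (π m).1 (π m).2 * H' (π n).1 (π n).2 * heq2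
        - (htilde H' (π m) (π n) * (H' (π n).1 (π n).2 * H' (π n).1 (π n).2)) *
            (eH' (π m).1 (π m).2)
        - htilde H' (π m) (π n) * (eH' (π n).1 (π n).2)
end
end

section
/- Let d, H, and {x_{ij}} be as in the construction. Then for all (i,j) ≠ (k,l) in [d]×[d], the square of the inner product satisfies (x_{ij}, x_{kl})² = 16·H_{ij}·H_{il}·H_{kj}·H_{kl}. -/
open scoped BigOperators

noncomputable section

theorem stmt_16 {K L : Type*} [Field K] [Field L]
    (hK2 : (2 : K) ≠ 0) (hKroot : ∀ a : K, a ^ 2 ≠ -1)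
    (φ : K →+* L) (i0 : L) (hi0 : i0 ^ 2 = -1)
    (conj : L →+* L) (hconj2 : ∀ x : L, conj (conj x) = x)
    (hconjφ : ∀ a : K, conj (φ a) = φ a) (hconji : conj i0 = -i0)
    (hLgen : ∀ x : L, ∃ a b : K, x = φ a + φ b * i0)
    {d : ℕ} (H : Matrix (Fin d) (Fin d) K)
    (hH1 : ∀ i j, H i j ^ 2 = 1)
    (hH2 : H.transpose * H = (d : K) • (1 : Matrix (Fin d) (Fin d) K))
    (hd8 : (d : K) = 8) :
    ∀ m n : Fin d × Fin d, m ≠ n →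
      (sesq conj (sicFam φ i0 H m) (sicFam φ i0 H n)) ^ 2 =
        16 * φ (H m.1 m.2 * H m.1 n.2 * H n.1 m.2 * H n.1 n.2) := by
  intro m n hmn
  obtain ⟨i, j⟩ := m
  obtain ⟨k, l⟩ := n
  simp only [sesq, sicFam, sicVec]
  obtain ⟨z, hz⟩ : ∃ z : L, z = -2 * (1 + i0) := ⟨_, rfl⟩
  rw [show ((-2 : L) * (1 + i0)) = z from hz.symm]
  have h2 : conj (2 : L) = 2 := by
    have h : (2 : L) = 1 + 1 := by norm_num
    rw [h, map_add, map_one]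
  have hw : conj z = -2 * (1 - i0) := by
    rw [hz, map_mul, map_neg, h2, map_add, map_one, hconji]; ring
  have hterm : ∀ m' : Fin d,
      conj (φ (H m' j) * (1 + z * (if m' = i then 1 else 0))) *
        (φ (H m' l) * (1 + z * (if m' = k then 1 else 0)))
      = φ (H m' j) * φ (H m' l)
        + (if m' = i then conj z * (φ (H m' j) * φ (H m' l)) else 0)
        + (if m' = k then z * (φ (H m' j) * φ (H m' l)) else 0)
        + (if m' = i then (if m' = k then conj z * z * (φ (H m' j) * φ (H m' l)) else 0)
            else 0) := by
    intro m'
    split_ifs <;>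
      simp only [mul_one, mul_zero, add_zero, map_mul, map_add, map_one, hconjφ] <;> ring
  simp only [hterm]
  rw [Finset.sum_add_distrib, Finset.sum_add_distrib, Finset.sum_add_distrib]
  simp only [Finset.sum_ite_eq', Finset.mem_univ, if_true]
  have hS : (∑ m' : Fin d, φ (H m' j) * φ (H m' l)) = if j = l then (8 : L) else 0 := by
    have h := congrFun (congrFun hH2 j) l
    simp only [Matrix.mul_apply, Matrix.transpose_apply, Matrix.smul_apply,
      Matrix.one_apply, smul_eq_mul] at h
    calc (∑ m' : Fin d, φ (H m' j) * φ (H m' l))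
        = φ (∑ m' : Fin d, H m' j * H m' l) := by
          rw [map_sum]; exact Finset.sum_congr rfl fun _ _ => (map_mul φ _ _).symm
      _ = φ ((d : K) * if j = l then 1 else 0) := by rw [h]
      _ = if j = l then (8 : L) else 0 := by
          rw [hd8, map_mul, apply_ite φ, map_one, map_zero, map_ofNat]
          split <;> ring
  rw [hS]
  by_cases hik : i = k <;> by_cases hjl : j = l
  · exact absurd (by rw [hik, hjl]) hmn
  · -- i = k, j ≠ l
    rw [if_neg hjl, if_pos hik]
    simp only [hik]
    rw [hw, hz]
    simp only [map_mul]
    linear_combination (16 * (φ (H k j)) ^ 2 * (φ (H k l)) ^ 2 * (i0 ^ 2 - 1)) * hi0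
  · -- i ≠ k, j = l
    rw [if_pos hjl, if_neg hik]
    simp only [hjl]
    have ha : φ (H i l) * φ (H i l) = 1 := by
      rw [← map_mul, ← sq, hH1, map_one]
    have hb : φ (H k l) * φ (H k l) = 1 := by
      rw [← map_mul, ← sq, hH1, map_one]
    rw [ha, hb]
    have hr : φ (H i l * H i l * H k l * H k l) = 1 := by
      rw [show H i l * H i l * H k l * H k l = H i l ^ 2 * H k l ^ 2 by ring,
        hH1, hH1, mul_one, map_one]
    rw [hr, hw, hz]; ring
  · -- i ≠ k, j ≠ l
    rw [if_neg hjl, if_neg hik]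
    have hA2 : (φ (H i j) * φ (H i l)) ^ 2 = 1 := by
      rw [mul_pow, ← map_pow, ← map_pow, hH1, hH1, map_one, mul_one]
    have hB2 : (φ (H k j) * φ (H k l)) ^ 2 = 1 := by
      rw [mul_pow, ← map_pow, ← map_pow, hH1, hH1, map_one, mul_one]
    rw [hw, hz]
    simp only [map_mul]
    linear_combination
      (4 * (φ (H i j) * φ (H i l)) ^ 2 + 4 * (φ (H k j) * φ (H k l)) ^ 2
        - 8 * (φ (H i j) * φ (H i l)) * (φ (H k j) * φ (H k l))) * hi0
      + (-8 * i0) * hA2 + (8 * i0) * hB2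
end
end

section
/- Let d, H, and {x_{ij}} be as in the construction, and let H̃ be defined by H̃_{(i,j),(k,l)} = H_{kj}·H_{il}. Then for all (i,j), (k,l) ∈ [d]×[d], H_{ij}·H_{kl}·(x_{ij}, x_{kl})² = 16·H̃_{(i,j),(k,l)} + 128·δ_{(i,j),(k,l)}; equivalently, the Gram matrix of the rescaled tensors {H_{ij}·x_{ij} ⊗ x_{ij}} equals 16·H̃ + 128·I. -/
open scoped BigOperators

noncomputable section

theorem stmt_18 {K L : Type*} [Field K] [Field L]
    (hK2 : (2 : K) ≠ 0) (hKroot : ∀ a : K, a ^ 2 ≠ -1)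
    (φ : K →+* L) (i0 : L) (hi0 : i0 ^ 2 = -1)
    (conj : L →+* L) (hconj2 : ∀ x : L, conj (conj x) = x)
    (hconjφ : ∀ a : K, conj (φ a) = φ a) (hconji : conj i0 = -i0)
    (hLgen : ∀ x : L, ∃ a b : K, x = φ a + φ b * i0)
    {d : ℕ} (H : Matrix (Fin d) (Fin d) K)
    (hH1 : ∀ i j, H i j ^ 2 = 1)
    (hH2 : H.transpose * H = (d : K) • (1 : Matrix (Fin d) (Fin d) K))
    (hd8 : (d : K) = 8) :
    ∀ m n : Fin d × Fin d,
      φ (H m.1 m.2) * φ (H n.1 n.2) *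
          (sesq conj (sicFam φ i0 H m) (sicFam φ i0 H n)) ^ 2 =
        16 * φ (htilde H m n) + 128 * (if m = n then 1 else 0) := by
  rintro ⟨i, j⟩ ⟨k, l⟩
  -- column orthogonality
  have hcol : (∑ m, φ (H m j) * φ (H m l)) = if j = l then (8 : L) else 0 := by
    have h := congrFun (congrFun hH2 j) l
    simp [Matrix.mul_apply, Matrix.transpose_apply, Matrix.smul_apply,
      Matrix.one_apply, hd8] at h
    calc (∑ m, φ (H m j) * φ (H m l)) = φ (∑ m, H m j * H m l) := by
          simp [map_sum, map_mul]
      _ = if j = l then (8 : L) else 0 := by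
          rw [h]; split <;> simp [map_ofNat]
  -- conj of z
  have hc2 : conj (2 : L) = 2 := map_ofNat conj 2
  have hcz : conj (-2 * (1 + i0)) = -2 * (1 - i0) := by
    rw [show ((-2 : L) * (1 + i0)) = -(2 * (1 + i0)) by ring, map_neg, map_mul,
      map_add, map_one, hconji, hc2]; ring
  set p := φ (H i j) with hpdef
  set q := φ (H i l) with hqdef
  set r := φ (H k j) with hrdef
  set s := φ (H k l) with hsdef
  have hp : p ^ 2 = 1 := by rw [hpdef, ← map_pow, hH1, map_one]
  have hq : q ^ 2 = 1 := by rw [hqdef, ← map_pow, hH1, map_one]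
  have hr : r ^ 2 = 1 := by rw [hrdef, ← map_pow, hH1, map_one]
  have hs : s ^ 2 = 1 := by rw [hsdef, ← map_pow, hH1, map_one]
  have hS : sesq conj (sicFam φ i0 H (i, j)) (sicFam φ i0 H (k, l)) =
      (if j = l then (8 : L) else 0) + (-2 * (1 - i0)) * (p * q)
        + (-2 * (1 + i0)) * (r * s)
        + (if i = k then ((-2 * (1 - i0)) * (-2 * (1 + i0))) * (p * q) else 0) := by
    unfold sesq sicFam sicVec
    simp only [map_mul, map_add, map_one, hconjφ, hcz, apply_ite conj, map_zero]
    have hterm : ∀ m : Fin d,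
        φ (H m j) * (1 + -2 * (1 - i0) * (if m = i then (1:L) else 0)) *
          (φ (H m l) * (1 + -2 * (1 + i0) * (if m = k then (1:L) else 0))) =
        φ (H m j) * φ (H m l)
          + (if m = i then (-2 * (1 - i0)) * (φ (H m j) * φ (H m l)) else 0)
          + (if m = k then (-2 * (1 + i0)) * (φ (H m j) * φ (H m l)) else 0)
          + (if m = i then (if m = k then
              ((-2 * (1 - i0)) * (-2 * (1 + i0))) * (φ (H m j) * φ (H m l)) else 0) else 0) := by
      intro m; split_ifs <;> ring
    rw [Finset.sum_congr rfl fun m _ => hterm m]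
    rw [Finset.sum_add_distrib, Finset.sum_add_distrib, Finset.sum_add_distrib]
    rw [hcol, Finset.sum_ite_eq' Finset.univ i, Finset.sum_ite_eq' Finset.univ k,
      Finset.sum_ite_eq' Finset.univ i]
    simp only [Finset.mem_univ, if_true]
    rfl
  rw [hS]
  have hht : φ (htilde H (i, j) (k, l)) = r * q := by
    simp [htilde, map_mul, hrdef, hqdef]
  rw [hht]
  by_cases hik : i = k <;> by_cases hjl : j = l
  · subst hik; subst hjl
    have hq' : q = p := hqdef.trans hpdef.symm
    have hr' : r = p := hrdef.trans hpdef.symm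
    have hs' : s = p := hsdef.trans hpdef.symm
    rw [hq', hr', hs']
    simp only [eq_self_iff_true, if_true]
    linear_combination (16*p^6*(i0^2-1) - 64*p^4) * hi0 + (16*p^4+80*p^2+128) * hp
  · subst hik
    have hr' : r = p := hrdef.trans hpdef.symm
    have hs' : s = q := hsdef.trans hqdef.symm
    rw [hr', hs']
    simp only [eq_self_iff_true, if_true, if_neg hjl]
    rw [if_neg (by simp [hjl] : ¬((i,j) = (i,l)))]
    linear_combination (16*p^3*q^3*(i0^2-1)) * hi0 + (16*p*q^3) * hp + (16*p*q) * hq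
  · subst hjl
    have hq' : q = p := hqdef.trans hpdef.symm
    have hs' : s = r := hsdef.trans hrdef.symm
    rw [hq', hs']
    simp only [eq_self_iff_true, if_true, if_neg hik]
    rw [if_neg (by simp [hik] : ¬((i,j) = (k,j)))]
    linear_combination (p*r*((-2+2*i0)^2*(p^2+1) + 16*(-2+2*i0) + 2*(-2+2*i0)*(-2-2*i0)*r^2)) * hp
      + (p*r*((-2-2*i0)^2*(r^2+1) + 16*(-2-2*i0) + 2*(-2+2*i0)*(-2-2*i0))) * hr
  · simp only [if_neg hik, if_neg hjl]
    rw [if_neg (by simp [hik] : ¬((i,j) = (k,l)))]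
    linear_combination (4*(1-i0)^2*p*q^2*s + 8*(1-i0^2)*q*r*s^2) * hp
      + (4*(1-i0)^2*p*s) * hq + (4*(1+i0)^2*p*s^3) * hr
      + (8*(1-i0^2)*q*r + 4*(1+i0)^2*p*s) * hs
      + (8*p*s - 8*q*r) * hi0
end
end
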